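/- arXiv:1010.4925 — 7 statements merged into one kernel-verified Lean document; each statement's English description precedes it below -/
import Mathlib

section
/- Let n be a positive integer. A function f : 𝔽₂ⁿ → 𝔽₂ is (1,0,0)-free if and only if either f is the constant all-ones function, or there exists a finite set A ⊆ 𝔽₂ⁿ such that for every x ∈ 𝔽₂ⁿ, f(x) = 1 if and only if there exists a ∈ A with a·x = 1 (i.e., f is a disjunction of linear functions). -/
open scoped BigOperators

/-- A function is triangle-free if no `x, y` have `f x = f y = f (x+y) = 1`. -/
def TriangleFree {n : ℕ} (f : (Fin n → ZMod 2) → ZMod 2) : Prop :=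
  ∀ x y : Fin n → ZMod 2, ¬ (f x = 1 ∧ f y = 1 ∧ f (x + y) = 1)

/-- The pair `(x, y)` exhibits the `(1,0,0)`-pattern for `f`:
exactly one of `f x`, `f y`, `f (x+y)` equals `1`. -/
def PatternOZZ {n : ℕ} (f : (Fin n → ZMod 2) → ZMod 2) (x y : Fin n → ZMod 2) : Prop :=
  (f x = 1 ∧ f y = 0 ∧ f (x + y) = 0) ∨
  (f x = 0 ∧ f y = 1 ∧ f (x + y) = 0) ∨
  (f x = 0 ∧ f y = 0 ∧ f (x + y) = 1)

/-- A function is `(1,0,0)`-free if no pair exhibits the `(1,0,0)`-pattern. -/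
def OZZFree {n : ℕ} (f : (Fin n → ZMod 2) → ZMod 2) : Prop :=
  ∀ x y : Fin n → ZMod 2, ¬ PatternOZZ f x y

/-- A function is linear if `f (x+y) = f x + f y` for all `x, y`. -/
def IsLinearFn {n : ℕ} (f : (Fin n → ZMod 2) → ZMod 2) : Prop :=
  ∀ x y : Fin n → ZMod 2, f (x + y) = f x + f y

/-- Fractional Hamming distance between two functions on `𝔽₂ⁿ`. -/
noncomputable def fdist {n : ℕ} (f g : (Fin n → ZMod 2) → ZMod 2) : ℝ :=
  (({x | f x ≠ g x} : Set (Fin n → ZMod 2)).ncard : ℝ) / (2 ^ n : ℝ)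

/-- Distance from a function to a set of functions (infimum of distances). -/
noncomputable def fdistSet {n : ℕ} (f : (Fin n → ZMod 2) → ZMod 2)
    (P : Set ((Fin n → ZMod 2) → ZMod 2)) : ℝ :=
  sInf (fdist f '' P)

/-- Inner product over `𝔽₂`. -/
def dotp {n : ℕ} (a x : Fin n → ZMod 2) : ZMod 2 := ∑ i, a i * x i

lemma zmod2_cases (c : ZMod 2) : c = 0 ∨ c = 1 := by revert c; decide

lemma dotp_add {n : ℕ} (a x y : Fin n → ZMod 2) :
    dotp a (x + y) = dotp a x + dotp a y := by
  simp [dotp, mul_add, Finset.sum_add_distrib]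

/-- represent a dual functional by `dotp` -/
lemma dual_repr {n : ℕ} (φ : Module.Dual (ZMod 2) (Fin n → ZMod 2)) :
    ∃ a : Fin n → ZMod 2, ∀ y, dotp a y = φ y := by
  refine ⟨fun i => φ (fun j => if i = j then 1 else 0), fun y => ?_⟩
  rw [LinearMap.pi_apply_eq_sum_univ φ y, dotp]
  exact Finset.sum_congr rfl fun i _ => by rw [smul_eq_mul, mul_comm]

theorem stmt_1 (n : ℕ) (hn : 0 < n) (f : (Fin n → ZMod 2) → ZMod 2) :
    OZZFree f ↔
      ((∀ x : Fin n → ZMod 2, f x = 1) ∨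
        ∃ A : Finset (Fin n → ZMod 2),
          ∀ x : Fin n → ZMod 2, f x = 1 ↔ ∃ a ∈ A, dotp a x = 1) := by
  classical
  constructor
  · intro hf
    rcases zmod2_cases (f 0) with h0 | h0
    · -- f 0 = 0 : build the subspace Z = f⁻¹(0)
      right
      have hadd : ∀ x y, f x = 0 → f y = 0 → f (x + y) = 0 := by
        intro x y hx hy
        rcases zmod2_cases (f (x + y)) with h | h
        · exact h
        · exact absurd (Or.inr (Or.inr ⟨hx, hy, h⟩)) (hf x y)
      set Z : Submodule (ZMod 2) (Fin n → ZMod 2) :=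
        { carrier := {x | f x = 0}
          add_mem' := fun hx hy => hadd _ _ hx hy
          zero_mem' := h0
          smul_mem' := by
            intro c x hx
            rcases zmod2_cases c with hc | hc <;> subst hc
            · simpa using h0
            · simpa using hx } with hZ
      refine ⟨(Set.toFinset {a | ∀ z ∈ Z, dotp a z = 0}), fun x => ?_⟩
      constructor
      · intro hx
        have hxZ : x ∉ Z := by
          intro hmem
          rw [show (x ∈ Z) = (f x = 0) from rfl] at hmem
          rw [hx] at hmem; exact one_ne_zero hmem
        obtain ⟨φ, hφx, hφZ⟩ := Z.exists_dual_map_eq_bot_of_notMem hxZ inferInstance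
        obtain ⟨a, ha⟩ := dual_repr φ
        have haZ : ∀ z ∈ Z, dotp a z = 0 := by
          intro z hz
          rw [ha]
          have : φ z ∈ Z.map φ := Submodule.mem_map_of_mem hz
          rw [hφZ] at this
          exact (Submodule.mem_bot (ZMod 2)).1 this
        refine ⟨a, by simpa using haZ, ?_⟩
        rw [ha]
        rcases zmod2_cases (φ x) with h | h
        · exact absurd h hφx
        · exact h
      · rintro ⟨a, haA, hax⟩
        rw [Set.mem_toFinset] at haA
        rcases zmod2_cases (f x) with h | h
        · have : x ∈ Z := h
          rw [haA x this] at hax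
          exact absurd hax.symm one_ne_zero
        · exact h
    · -- f 0 = 1 : f is constant 1
      left
      intro x
      rcases zmod2_cases (f x) with h | h
      · exfalso
        refine hf x 0 (Or.inr (Or.inl ⟨h, h0, ?_⟩))
        simpa using h
      · exact h
  · rintro (hone | ⟨A, hA⟩)
    · intro x y hp
      rcases hp with ⟨_, h, _⟩ | ⟨h, _, _⟩ | ⟨h, _, _⟩ <;>
        · first | (rw [hone y] at h; exact one_ne_zero h) | (rw [hone x] at h; exact one_ne_zero h)
    · have hzero : ∀ x, f x = 0 ↔ ∀ a ∈ A, dotp a x = 0 := by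
        intro x
        constructor
        · intro hx a haA
          rcases zmod2_cases (dotp a x) with h | h
          · exact h
          · have := (hA x).2 ⟨a, haA, h⟩
            rw [hx] at this; exact absurd this.symm one_ne_zero
        · intro h
          rcases zmod2_cases (f x) with hx | hx
          · exact hx
          · obtain ⟨a, haA, hax⟩ := (hA x).1 hx
            rw [h a haA] at hax
            exact absurd hax.symm one_ne_zero
      intro x y hp
      rcases hp with ⟨hx, hy, hxy⟩ | ⟨hx, hy, hxy⟩ | ⟨hx, hy, hxy⟩
      · obtain ⟨a, haA, hax⟩ := (hA x).1 hx
        have := (hzero (x + y)).1 hxy a haA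
        rw [dotp_add, hax, (hzero y).1 hy a haA] at this
        simp at this
      · obtain ⟨a, haA, hay⟩ := (hA y).1 hy
        have := (hzero (x + y)).1 hxy a haA
        rw [dotp_add, hay, (hzero x).1 hx a haA] at this
        simp at this
      · obtain ⟨a, haA, haxy⟩ := (hA (x + y)).1 hxy
        rw [dotp_add, (hzero x).1 hx a haA, (hzero y).1 hy a haA] at haxy
        exact absurd haxy.symm one_ne_zero
end

section
/- Let n be a positive integer, let ε > 0, and let f : 𝔽₂ⁿ → 𝔽₂ be a function such that dist(f, g) ≥ ε for every (1,0,0)-free function g : 𝔽₂ⁿ → 𝔽₂. Then the number of pairs (x, y) ∈ 𝔽₂ⁿ × 𝔽₂ⁿ such that exactly one of f(x), f(y), f(x+y) equals 1 is at least (ε²/128)·2^(2n). (Equivalently: if uniformly random x, y produce such a pattern with probability less than ε²/128, then f is ε-close to some (1,0,0)-free function.) -/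
open scoped BigOperators

private lemma zmod2_ne_zero : ∀ {a : ZMod 2}, a ≠ 0 ↔ a = 1 := by decide
private lemma zmod2_ne_one : ∀ {a : ZMod 2}, a ≠ 1 ↔ a = 0 := by decide

set_option maxHeartbeats 1000000 in
theorem stmt_3 (n : ℕ) (hn : 0 < n) (ε : ℝ) (hε : 0 < ε)
    (f : (Fin n → ZMod 2) → ZMod 2)
    (hfar : ∀ g : (Fin n → ZMod 2) → ZMod 2, OZZFree g → ε ≤ fdist f g) :
    ε ^ 2 / 128 * 2 ^ (2 * n) ≤
      (({p : (Fin n → ZMod 2) × (Fin n → ZMod 2) |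
          PatternOZZ f p.1 p.2}).ncard : ℝ) := by
  classical
  by_contra hcon
  push_neg at hcon
  -- basic char-2 facts
  have hvadd : ∀ x : Fin n → ZMod 2, x + x = 0 := by
    intro x; funext i
    show x i + x i = 0
    generalize x i = a; revert a; decide
  have hcancel : ∀ x y : Fin n → ZMod 2, x + (x + y) = y := by
    intro x y; rw [← add_assoc, hvadd, zero_add]
  set A : Finset (Fin n → ZMod 2) := Finset.univ.filter (fun x => f x = 0) with hA
  set K := A.card with hKdef
  set Eset : Finset ((Fin n → ZMod 2) × (Fin n → ZMod 2)) :=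
    Finset.univ.filter (fun p => p.1 ∈ A ∧ p.2 ∈ A ∧ p.1 + p.2 ∉ A) with hEsetdef
  set E := Eset.card with hEdef
  have memA : ∀ x, x ∈ A ↔ f x = 0 := by intro x; simp [hA]
  have nmemA : ∀ x, x ∉ A ↔ f x = 1 := by
    intro x; rw [memA]; exact zmod2_ne_zero
  have memE : ∀ p : (Fin n → ZMod 2) × (Fin n → ZMod 2),
      p ∈ Eset ↔ p.1 ∈ A ∧ p.2 ∈ A ∧ p.1 + p.2 ∉ A := by
    intro p; simp [hEsetdef]
  -- the constant-one function is OZZ-free, giving ε * 2^n ≤ K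
  have hone : OZZFree (fun _ : Fin n → ZMod 2 => (1 : ZMod 2)) := by
    intro x y hp
    have h10 : (1 : ZMod 2) ≠ 0 := by decide
    rcases hp with ⟨_, h, _⟩ | ⟨h, _, _⟩ | ⟨h, _, _⟩ <;> exact h10 h
  have Npos : (0:ℝ) < 2 ^ n := by positivity
  have hd1 : fdist f (fun _ => 1) = (K : ℝ) / 2 ^ n := by
    have hs : {x | f x ≠ (fun _ : Fin n → ZMod 2 => (1:ZMod 2)) x} = (A : Set (Fin n → ZMod 2)) := by
      ext x
      simp only [Set.mem_setOf_eq, Finset.mem_coe]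
      rw [memA]
      exact zmod2_ne_one
    rw [fdist, hs, Set.ncard_coe_finset]
  have hKN : ε * 2 ^ n ≤ (K : ℝ) := by
    have := hfar _ hone
    rw [hd1] at this
    exact (le_div_iff₀ Npos).mp this
  have hKpos : (0:ℝ) < (K:ℝ) := lt_of_lt_of_le (by positivity) hKN
  -- E is at most the number of pattern pairs
  have hEP : (E : ℝ) < ε ^ 2 / 128 * 2 ^ (2 * n) := by
    refine lt_of_le_of_lt ?_ hcon
    have hsub : (↑Eset : Set ((Fin n → ZMod 2) × (Fin n → ZMod 2))) ⊆
        {p | PatternOZZ f p.1 p.2} := by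
      intro p hp
      rw [Finset.mem_coe, memE] at hp
      exact Or.inr (Or.inr ⟨(memA _).mp hp.1, (memA _).mp hp.2.1, (nmemA _).mp hp.2.2⟩)
    have h := Set.ncard_le_ncard hsub (Set.toFinite _)
    rw [Set.ncard_coe_finset] at h
    exact_mod_cast h
  have h2n : ((2:ℝ) ^ (2 * n)) = (2^n : ℝ)^2 := by
    rw [mul_comm, pow_mul]
  have hE128 : (E : ℝ) < ε^2 / 128 * (2^n:ℝ)^2 := by rwa [h2n] at hEP
  have hsq : (ε * 2^n) * (ε * 2^n) ≤ (K:ℝ) * K :=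
    mul_le_mul hKN hKN (by positivity) hKpos.le
  have hEKK : (E:ℝ) * 128 < (K:ℝ) * (K:ℝ) := by nlinarith [hsq, hE128]
  have hsq2 : (ε * 2^n) * (ε * 2^n) ≤ ε * 2^n * (K:ℝ) :=
    mul_le_mul_of_nonneg_left hKN (by positivity)
  have hENK : (E:ℝ) * 128 < ε * 2^n * (K:ℝ) := by nlinarith [hsq2, hE128]
  -- counting functions
  set c : (Fin n → ZMod 2) → ℕ := fun h => (A.filter (fun y => y + h ∈ A)).card with hc
  set d : (Fin n → ZMod 2) → ℕ := fun h => (A.filter (fun y => y + h ∉ A)).card with hd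
  have hcd : ∀ h, c h + d h = K := by
    intro h
    exact Finset.card_filter_add_card_filter_not _
  -- quadrilateral trick : c h * d h ≤ 2 E
  have hquad : ∀ h, c h * d h ≤ 2 * E := by
    intro h
    set S1 := A.filter (fun y => y + h ∈ A) with hS1
    set S2 := A.filter (fun y => y + h ∉ A) with hS2
    have hφ : ∀ p ∈ S1 ×ˢ S2,
        (if p.1 + p.2 + h ∈ A then Sum.inr (p.1, p.1 + p.2 + h)
          else Sum.inl (p.2, p.1 + h) :
          ((Fin n → ZMod 2) × (Fin n → ZMod 2)) ⊕ ((Fin n → ZMod 2) × (Fin n → ZMod 2)))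
          ∈ Eset.disjSum Eset := by
      intro p hp
      rw [Finset.mem_product] at hp
      obtain ⟨hp1, hp2⟩ := hp
      rw [hS1, Finset.mem_filter] at hp1
      rw [hS2, Finset.mem_filter] at hp2
      by_cases hw : p.1 + p.2 + h ∈ A
      · rw [if_pos hw]
        rw [Finset.inr_mem_disjSum, memE]
        refine ⟨hp1.1, hw, ?_⟩
        have : p.1 + (p.1 + p.2 + h) = p.2 + h := by
          rw [← add_assoc, ← add_assoc, hvadd, zero_add]
        rw [this]
        exact hp2.2
      · rw [if_neg hw]
        rw [Finset.inl_mem_disjSum, memE]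
        exact ⟨hp2.1, hp1.2, by rwa [show p.2 + (p.1 + h) = p.1 + p.2 + h by ring]⟩
    have hinj : Set.InjOn (fun p : (Fin n → ZMod 2) × (Fin n → ZMod 2) =>
        (if p.1 + p.2 + h ∈ A then Sum.inr (p.1, p.1 + p.2 + h)
          else Sum.inl (p.2, p.1 + h) :
          ((Fin n → ZMod 2) × (Fin n → ZMod 2)) ⊕ ((Fin n → ZMod 2) × (Fin n → ZMod 2))))
        ↑(S1 ×ˢ S2) := by
      intro p hp q hq hpq
      by_cases h1 : p.1 + p.2 + h ∈ A <;> by_cases h2 : q.1 + q.2 + h ∈ A <;>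
        simp only [h1, h2, if_pos, if_neg, if_true, if_false] at hpq
      · simp only [Sum.inr.injEq, Prod.mk.injEq] at hpq
        obtain ⟨e1, e2⟩ := hpq
        have e3 : p.1 + p.2 = q.1 + q.2 := add_right_cancel e2
        rw [e1] at e3
        exact Prod.ext e1 (add_left_cancel e3)
      · exact absurd hpq (by simp)
      · exact absurd hpq (by simp)
      · simp only [Sum.inl.injEq, Prod.mk.injEq] at hpq
        obtain ⟨e1, e2⟩ := hpq
        exact Prod.ext (add_right_cancel e2) e1
    have := Finset.card_le_card_of_injOn _ hφ hinj
    rw [Finset.card_product, Finset.card_disjSum] at this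
    calc c h * d h = S1.card * S2.card := rfl
      _ ≤ E + E := this
      _ = 2 * E := by ring
    done
  have hcK : ∀ h, c h ≤ K := fun h => le_of_add_le_left (le_of_eq (hcd h))
  -- H : candidate subgroup
  set H : Finset (Fin n → ZMod 2) := Finset.univ.filter (fun h => K < 2 * c h) with hHdef
  have memH : ∀ h, h ∈ H ↔ K < 2 * c h := by intro h; simp [hHdef]
  -- real versions
  have hcdR : ∀ h, (c h : ℝ) + d h = K := by
    intro h; exact_mod_cast congrArg (Nat.cast : ℕ → ℝ) (hcd h)
  have hquadR : ∀ h, (c h : ℝ) * d h ≤ 2 * E := by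
    intro h; exact_mod_cast hquad h
  have hdH : ∀ h ∈ H, (d h : ℝ) * K ≤ 4 * E := by
    intro h hh
    rw [memH] at hh
    have hh' : (K:ℝ) < 2 * c h := by exact_mod_cast hh
    nlinarith [hquadR h, hcdR h, (d h).cast_nonneg (α := ℝ)]
  have hcnH : ∀ h, h ∉ H → (c h : ℝ) * K ≤ 4 * E := by
    intro h hh
    rw [memH] at hh
    push_neg at hh
    have hh' : 2 * (c h:ℝ) ≤ K := by exact_mod_cast hh
    nlinarith [hquadR h, hcdR h, (c h).cast_nonneg (α := ℝ)]
  -- H is a subgroup: contains 0 and closed under addition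
  have hc0 : c 0 = K := by
    rw [hc]
    simp only [add_zero]
    rw [hKdef]
    congr 1
    exact Finset.filter_true_of_mem (fun x hx => hx)
  have hK0 : 0 < K := by exact_mod_cast hKpos
  have h0H : (0 : Fin n → ZMod 2) ∈ H := by
    rw [memH, hc0]; omega
  -- superadditivity
  have hsuper : ∀ h1 h2 : Fin n → ZMod 2, c h1 + c h2 ≤ c (h1 + h2) + K := by
    intro h1 h2
    set S1 := A.filter (fun y => y + h1 ∈ A) with hS1
    set S2 := A.filter (fun y => y + h2 ∈ A) with hS2
    set U := S1.filter (fun y => y + h1 ∈ S2) with hU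
    set W := S1.filter (fun y => ¬ (y + h1 ∈ S2)) with hW
    have hUW : U.card + W.card = S1.card :=
      Finset.card_filter_add_card_filter_not _
    have hUsub : U ⊆ A.filter (fun y => y + (h1 + h2) ∈ A) := by
      intro y hy
      rw [hU, Finset.mem_filter] at hy
      obtain ⟨hy1, hy2⟩ := hy
      rw [hS1, Finset.mem_filter] at hy1
      rw [hS2, Finset.mem_filter] at hy2
      rw [Finset.mem_filter]
      exact ⟨hy1.1, by rw [← add_assoc]; exact hy2.2⟩
    have hUc : U.card ≤ c (h1 + h2) := Finset.card_le_card hUsub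
    have hWinj : W.card ≤ (A \ S2).card := by
      apply Finset.card_le_card_of_injOn (fun y => y + h1)
      · intro y hy
        rw [Finset.mem_coe, hW, Finset.mem_filter] at hy
        obtain ⟨hy1, hy2⟩ := hy
        rw [hS1, Finset.mem_filter] at hy1
        rw [Finset.mem_coe, Finset.mem_sdiff]
        exact ⟨hy1.2, hy2⟩
      · intro p _ q _ hpq
        exact add_right_cancel hpq
    have hSd : (A \ S2).card + S2.card = K :=
      Finset.card_sdiff_add_card_eq_card (Finset.filter_subset _ _)
    have hc1 : c h1 = S1.card := rfl
    have hc2 : c h2 = S2.card := rfl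
    omega
  have hclosed : ∀ h1 h2, h1 ∈ H → h2 ∈ H → h1 + h2 ∈ H := by
    intro h1 h2 hh1 hh2
    have hdd1 := hdH h1 hh1
    have hdd2 := hdH h2 hh2
    have hs : (c h1 : ℝ) + c h2 ≤ (c (h1 + h2) : ℝ) + K := by exact_mod_cast hsuper h1 h2
    rw [memH]
    have hEnn0 : (0:ℝ) ≤ (E:ℝ) := Nat.cast_nonneg _
    have h16 : (2*(d h1:ℝ) + 2*(d h2)) * K < (K:ℝ) * K := by
      have hx : (2*(d h1:ℝ) + 2*(d h2)) * K = 2*((d h1:ℝ)*K) + 2*((d h2:ℝ)*K) := by ring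
      rw [hx]
      linarith [hdd1, hdd2, hEKK, hEnn0]
    have h17 : 2*(d h1:ℝ) + 2*(d h2) < K := (mul_lt_mul_iff_of_pos_right hKpos).mp h16
    have hgoal : (K : ℝ) < 2 * (c (h1 + h2) : ℝ) := by
      linarith [hcdR h1, hcdR h2, hs]
    exact_mod_cast hgoal
  -- fiberwise sums
  have hfib1 : E = ∑ a ∈ A, (Eset.filter (fun p => p.1 = a)).card := by
    apply Finset.card_eq_sum_card_fiberwise
    intro p hp
    exact ((memE p).mp hp).1
  have hfib1eq : ∀ a ∈ A, (Eset.filter (fun p => p.1 = a)).card = d a := by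
    intro a ha
    refine Finset.card_bij' (fun p _ => p.2) (fun z _ => (a, z)) ?_ ?_ ?_ ?_
    · intro p hp
      rw [Finset.mem_filter, memE] at hp
      rw [Finset.mem_filter]
      refine ⟨hp.1.2.1, ?_⟩
      rw [add_comm p.2 a, ← hp.2]
      exact hp.1.2.2
    · intro z hz
      rw [Finset.mem_filter] at hz
      rw [Finset.mem_filter, memE]
      exact ⟨⟨ha, hz.1, by rw [add_comm a z]; exact hz.2⟩, rfl⟩
    · intro p hp
      rw [Finset.mem_filter] at hp
      exact Prod.ext hp.2.symm rfl
    · intro z hz; rfl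
  have hsumA : ∑ a ∈ A, d a = E := by
    rw [hfib1]
    exact (Finset.sum_congr rfl (fun a ha => (hfib1eq a ha))).symm
  have hfib2 : E = ∑ h ∈ Finset.univ.filter (fun h => h ∉ A),
      (Eset.filter (fun p => p.1 + p.2 = h)).card := by
    apply Finset.card_eq_sum_card_fiberwise
    intro p hp
    rw [Finset.mem_coe, Finset.mem_filter]
    exact ⟨Finset.mem_univ _, ((memE p).mp hp).2.2⟩
  have hfib2eq : ∀ h, h ∉ A → (Eset.filter (fun p => p.1 + p.2 = h)).card = c h := by
    intro h hh
    refine Finset.card_bij' (fun p _ => p.1) (fun y _ => (y, y + h)) ?_ ?_ ?_ ?_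
    · intro p hp
      rw [Finset.mem_filter, memE] at hp
      rw [Finset.mem_filter]
      refine ⟨hp.1.1, ?_⟩
      have he : p.1 + h = p.2 := by rw [← hp.2, hcancel]
      rw [he]
      exact hp.1.2.1
    · intro y hy
      rw [Finset.mem_filter] at hy
      rw [Finset.mem_filter, memE]
      refine ⟨⟨hy.1, hy.2, ?_⟩, ?_⟩
      · rw [hcancel]; exact hh
      · rw [hcancel]
    · intro p hp
      rw [Finset.mem_filter] at hp
      have he : p.1 + h = p.2 := by rw [← hp.2, hcancel]
      exact Prod.ext rfl he
    · intro y hy; rfl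
  have hsumC : ∑ h ∈ Finset.univ.filter (fun h => h ∉ A), c h = E := by
    rw [hfib2]
    refine (Finset.sum_congr rfl (fun h hh => ?_)).symm
    exact hfib2eq h (Finset.mem_filter.mp hh).2
  -- sums over the symmetric difference
  have hAHsum : (∑ a ∈ A \ H, (d a : ℝ)) ≤ (E:ℝ) := by
    have h1 : ∑ a ∈ A \ H, d a ≤ ∑ a ∈ A, d a :=
      Finset.sum_le_sum_of_subset Finset.sdiff_subset
    rw [hsumA] at h1
    exact_mod_cast h1
  have hHAsum : (∑ h ∈ H \ A, (c h : ℝ)) ≤ (E:ℝ) := by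
    have hsub : H \ A ⊆ Finset.univ.filter (fun h => h ∉ A) := by
      intro h hh
      rw [Finset.mem_sdiff] at hh
      rw [Finset.mem_filter]
      exact ⟨Finset.mem_univ _, hh.2⟩
    have h1 : ∑ h ∈ H \ A, c h ≤ ∑ h ∈ Finset.univ.filter (fun h => h ∉ A), c h :=
      Finset.sum_le_sum_of_subset hsub
    rw [hsumC] at h1
    exact_mod_cast h1
  have hEnn : (0:ℝ) ≤ (E:ℝ) := Nat.cast_nonneg _
  have hAHbound : ((A \ H).card : ℝ) * ((K:ℝ)/2) ≤ (E:ℝ) := by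
    have hlb : ∀ a ∈ A \ H, (K:ℝ)/2 ≤ (d a : ℝ) := by
      intro a ha
      rw [Finset.mem_sdiff] at ha
      have hca := hcnH a ha.2
      have h1 : (32*(c a:ℝ)) * K < (K:ℝ) * K := by
        have hx : (32*(c a:ℝ)) * K = 32*((c a:ℝ)*K) := by ring
        rw [hx]; linarith [hEKK, hEnn]
      have h2 : 32*(c a:ℝ) < K := (mul_lt_mul_iff_of_pos_right hKpos).mp h1
      linarith [hcdR a, (Nat.cast_nonneg (α := ℝ) (c a))]
    have h2 := Finset.card_nsmul_le_sum (A \ H) (fun a => (d a : ℝ)) ((K:ℝ)/2) hlb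
    rw [nsmul_eq_mul] at h2
    exact le_trans h2 hAHsum
  have hHAbound : ((H \ A).card : ℝ) * ((K:ℝ)/2) ≤ (E:ℝ) := by
    have hlb : ∀ h ∈ H \ A, (K:ℝ)/2 ≤ (c h : ℝ) := by
      intro h hh
      rw [Finset.mem_sdiff] at hh
      have hdh := hdH h hh.1
      have h1 : (32*(d h:ℝ)) * K < (K:ℝ) * K := by
        have hx : (32*(d h:ℝ)) * K = 32*((d h:ℝ)*K) := by ring
        rw [hx]; linarith [hEKK, hEnn]
      have h2 : 32*(d h:ℝ) < K := (mul_lt_mul_iff_of_pos_right hKpos).mp h1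
      linarith [hcdR h, (Nat.cast_nonneg (α := ℝ) (d h))]
    have h2 := Finset.card_nsmul_le_sum (H \ A) (fun h => (c h : ℝ)) ((K:ℝ)/2) hlb
    rw [nsmul_eq_mul] at h2
    exact le_trans h2 hHAsum
  -- the corrected function g
  set g : (Fin n → ZMod 2) → ZMod 2 := fun x => if x ∈ H then 0 else 1 with hg
  have hgmem : ∀ x, g x = 0 ↔ x ∈ H := by
    intro x
    by_cases hx : x ∈ H
    · simp [hg, hx]
    · simp [hg, hx]
  have hgOZZ : OZZFree g := by
    intro x y hp
    have key : ∀ u v : Fin n → ZMod 2, g u = 0 → g v = 0 → g (u + v) = 0 := by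
      intro u v hu hv
      exact (hgmem _).mpr (hclosed _ _ ((hgmem u).mp hu) ((hgmem v).mp hv))
    rcases hp with ⟨h1, h2, h3⟩ | ⟨h1, h2, h3⟩ | ⟨h1, h2, h3⟩
    · have hx0 : g (y + (x + y)) = 0 := key _ _ h2 h3
      rw [show y + (x + y) = x from by rw [add_comm x y, hcancel]] at hx0
      rw [hx0] at h1
      exact absurd h1 (by decide)
    · have hy0 : g (x + (x + y)) = 0 := key _ _ h1 h3
      rw [hcancel] at hy0
      rw [hy0] at h2
      exact absurd h2 (by decide)
    · have hxy0 := key _ _ h1 h2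
      rw [hxy0] at h3
      exact absurd h3 (by decide)
  have hset : {x | f x ≠ g x} = ↑((A \ H) ∪ (H \ A)) := by
    ext x
    simp only [Set.mem_setOf_eq, Finset.coe_union, Set.mem_union, Finset.mem_coe,
      Finset.mem_sdiff]
    by_cases hxH : x ∈ H <;> by_cases hxA : x ∈ A
    · have h1 : f x = 0 := (memA x).mp hxA
      have h2 : g x = 0 := (hgmem x).mpr hxH
      simp [h1, h2, hxH, hxA]
    · have h1 : f x = 1 := (nmemA x).mp hxA
      have h2 : g x = 0 := (hgmem x).mpr hxH
      simp [h1, h2, hxH, hxA]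
    · have h1 : f x = 0 := (memA x).mp hxA
      have h2 : g x = 1 := by simp [hg, hxH]
      simp [h1, h2, hxH, hxA]
    · have h1 : f x = 1 := (nmemA x).mp hxA
      have h2 : g x = 1 := by simp [hg, hxH]
      simp [h1, h2, hxH, hxA]
  have hgdist : fdist f g = ((((A \ H) ∪ (H \ A)).card : ℕ) : ℝ) / 2 ^ n := by
    rw [fdist, hset, Set.ncard_coe_finset]
  have hcardU : ((((A \ H) ∪ (H \ A)).card : ℕ) : ℝ) ≤
      ((A \ H).card : ℝ) + ((H \ A).card : ℝ) := by
    exact_mod_cast Finset.card_union_le _ _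
  have hfinal := hfar g hgOZZ
  rw [hgdist] at hfinal
  have hcards : ((A \ H).card : ℝ) + ((H \ A).card : ℝ) < ε * 2 ^ n := by
    have hb := (Nat.cast_nonneg (α := ℝ) (A \ H).card)
    have hg' := (Nat.cast_nonneg (α := ℝ) (H \ A).card)
    have h1 : (32*(((A \ H).card : ℝ) + ((H \ A).card : ℝ))) * K < (ε * 2 ^ n) * K := by
      have hx : (32*(((A \ H).card : ℝ) + ((H \ A).card : ℝ))) * K
          = 64*(((A \ H).card : ℝ) * ((K:ℝ)/2)) + 64*(((H \ A).card : ℝ) * ((K:ℝ)/2)) := by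
        ring
      rw [hx]
      linarith [hAHbound, hHAbound, hENK, hEnn]
    have h2 : 32*(((A \ H).card : ℝ) + ((H \ A).card : ℝ)) < ε * 2 ^ n :=
      (mul_lt_mul_iff_of_pos_right hKpos).mp h1
    linarith
  have hfin2 : ε * 2 ^ n ≤ ((((A \ H) ∪ (H \ A)).card : ℕ) : ℝ) :=
    (le_div_iff₀ Npos).mp hfinal
  linarith
end

section
/- Let n be a positive integer, δ > 0, f : 𝔽₂ⁿ → 𝔽₂, and x₀ ∈ 𝔽₂ⁿ. Suppose |{y ∈ 𝔽₂ⁿ : f(y) = 0 and f(x₀+y) = 0}| ≥ δ·2ⁿ and |{y ∈ 𝔽₂ⁿ : f(y) = 1 and f(x₀+y) = 0}| ≥ δ·2ⁿ. Then the number of pairs (x, y) ∈ 𝔽₂ⁿ × 𝔽₂ⁿ such that exactly one of f(x), f(y), f(x+y) equals 1 is at least (δ²/2)·2^(2n). -/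
open scoped BigOperators

theorem stmt_4 (n : ℕ) (hn : 0 < n) (δ : ℝ) (hδ : 0 < δ)
    (f : (Fin n → ZMod 2) → ZMod 2) (x₀ : Fin n → ZMod 2)
    (h00 : δ * 2 ^ n ≤
      (({y | f y = 0 ∧ f (x₀ + y) = 0} : Set (Fin n → ZMod 2)).ncard : ℝ))
    (h10 : δ * 2 ^ n ≤
      (({y | f y = 1 ∧ f (x₀ + y) = 0} : Set (Fin n → ZMod 2)).ncard : ℝ)) :
    δ ^ 2 / 2 * 2 ^ (2 * n) ≤
      (({p : (Fin n → ZMod 2) × (Fin n → ZMod 2) |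
          PatternOZZ f p.1 p.2}).ncard : ℝ) := by
  classical
  set A : Set (Fin n → ZMod 2) := {y | f y = 0 ∧ f (x₀ + y) = 0} with hA
  set B : Set (Fin n → ZMod 2) := {y | f y = 1 ∧ f (x₀ + y) = 0} with hB
  set P : Set ((Fin n → ZMod 2) × (Fin n → ZMod 2)) := {p | PatternOZZ f p.1 p.2} with hP
  have hxx : x₀ + x₀ = 0 := by
    funext i
    show x₀ i + x₀ i = 0
    exact CharTwo.add_self_eq_zero _
  have hzm : ∀ z : ZMod 2, z ≠ 1 → z = 0 := by decide
  set S1 : Set ((Fin n → ZMod 2) × (Fin n → ZMod 2)) :=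
    (A ×ˢ B) ∩ {p | f (p.1 + p.2) = 1} with hS1
  set S2 : Set ((Fin n → ZMod 2) × (Fin n → ZMod 2)) :=
    (A ×ˢ B) ∩ {p | f (p.1 + p.2) ≠ 1} with hS2
  have h1 : S1.ncard ≤ P.ncard := by
    apply Set.ncard_le_ncard_of_injOn (fun p => (x₀ + p.1, x₀ + p.2))
    · rintro ⟨a, b⟩ ⟨⟨⟨ha0, ha1⟩, hb0, hb1⟩, hab⟩
      right; right
      have hsum : x₀ + a + (x₀ + b) = a + b := by
        have : x₀ + a + (x₀ + b) = (x₀ + x₀) + (a + b) := by abel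
        rw [this, hxx, zero_add]
      exact ⟨ha1, hb1, by simpa [hsum] using hab⟩
    · rintro ⟨a, b⟩ _ ⟨a', b'⟩ _ h
      simp only [Prod.mk.injEq] at h
      exact Prod.ext (add_left_cancel h.1) (add_left_cancel h.2)
  have h2 : S2.ncard ≤ P.ncard := by
    apply Set.ncard_le_ncard_of_injOn (fun p => (p.2, p.1 + p.2))
    · rintro ⟨a, b⟩ ⟨⟨⟨ha0, ha1⟩, hb0, hb1⟩, hab⟩
      left
      have hsum : b + (a + b) = a := by
        have : b + (a + b) = (b + b) + a := by abel
        rw [this]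
        have hbb : b + b = 0 := by
          funext i; exact CharTwo.add_self_eq_zero _
        rw [hbb, zero_add]
      exact ⟨hb0, hzm _ hab, by simpa [hsum] using ha0⟩
    · rintro ⟨a, b⟩ _ ⟨a', b'⟩ _ h
      simp only [Prod.mk.injEq] at h
      obtain ⟨hb, hab⟩ := h
      rw [hb] at hab
      exact Prod.ext (add_right_cancel hab) hb
  have hsplit : (A ×ˢ B).ncard = S1.ncard + S2.ncard := by
    rw [← Set.ncard_union_eq (by
        rw [hS1, hS2]
        exact Set.disjoint_left.mpr (fun p hp hq => hq.2 hp.2))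
      (Set.toFinite _) (Set.toFinite _)]
    congr 1
    rw [hS1, hS2, ← Set.inter_union_distrib_left]
    have : ({p : (Fin n → ZMod 2) × (Fin n → ZMod 2) | f (p.1 + p.2) = 1} ∪
        {p | f (p.1 + p.2) ≠ 1}) = Set.univ := by
      ext p; simp [em]
    rw [this, Set.inter_univ]
  have hprod : (A ×ˢ B).ncard = A.ncard * B.ncard := by
    rw [Set.ncard_eq_toFinset_card', Set.ncard_eq_toFinset_card', Set.ncard_eq_toFinset_card',
      Set.toFinset_prod, Finset.card_product]
  have hkey : δ ^ 2 * 2 ^ (2 * n) ≤ 2 * (P.ncard : ℝ) := by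
    have hAB : δ ^ 2 * 2 ^ (2 * n) ≤ (A.ncard : ℝ) * B.ncard := by
      have h2n : (2 : ℝ) ^ (2 * n) = 2 ^ n * 2 ^ n := by
        rw [two_mul, pow_add]
      have hpos : (0 : ℝ) ≤ δ * 2 ^ n := by positivity
      calc δ ^ 2 * 2 ^ (2 * n) = (δ * 2 ^ n) * (δ * 2 ^ n) := by rw [h2n]; ring
        _ ≤ (A.ncard : ℝ) * B.ncard := by
            apply mul_le_mul h00 h10 hpos
            exact le_trans hpos h00
    calc δ ^ 2 * 2 ^ (2 * n) ≤ (A.ncard : ℝ) * B.ncard := hAB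
      _ = ((A.ncard * B.ncard : ℕ) : ℝ) := by push_cast; ring
      _ = ((S1.ncard + S2.ncard : ℕ) : ℝ) := by rw [← hprod, hsplit]
      _ ≤ ((P.ncard + P.ncard : ℕ) : ℝ) := by
          exact_mod_cast Nat.add_le_add h1 h2
      _ = 2 * (P.ncard : ℝ) := by push_cast; ring
  linarith
end

section
/- Let n be a positive integer and let g : 𝔽₂ⁿ → 𝔽₂. Let Z = |{z ∈ 𝔽₂ⁿ : g(z) = 0}|. Suppose that for every x ∈ 𝔽₂ⁿ, the number of y ∈ 𝔽₂ⁿ such that exactly one of g(x), g(y), g(x+y) equals 1 is strictly less than Z/3. Then g is (1,0,0)-free, i.e., there are no x, y ∈ 𝔽₂ⁿ such that exactly one of g(x), g(y), g(x+y) equals 1. -/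
open scoped BigOperators

theorem stmt_5 (n : ℕ) (hn : 0 < n) (g : (Fin n → ZMod 2) → ZMod 2)
    (h : ∀ x : Fin n → ZMod 2,
      (({y | PatternOZZ g x y} : Set (Fin n → ZMod 2)).ncard : ℝ) <
        (({z | g z = 0} : Set (Fin n → ZMod 2)).ncard : ℝ) / 3) :
    OZZFree g := by
  intro x y hpat
  have zmod2_cases : ∀ v : ZMod 2, v = 0 ∨ v = 1 := by decide
  -- extract a triple a, b, c with g a = 1, g b = 0, g c = 0, c = a + b
  obtain ⟨a, b, c, ha, hb, hc, hsum⟩ :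
      ∃ a b c : Fin n → ZMod 2, g a = 1 ∧ g b = 0 ∧ g c = 0 ∧ c = a + b := by
    rcases hpat with ⟨h1, h2, h3⟩ | ⟨h1, h2, h3⟩ | ⟨h1, h2, h3⟩
    · exact ⟨x, y, x + y, h1, h2, h3, rfl⟩
    · exact ⟨y, x, x + y, h2, h1, h3, by rw [add_comm]⟩
    · refine ⟨x + y, x, y, h3, h1, h2, ?_⟩
      have hk : ∀ u v : ZMod 2, v = u + v + u := by decide
      funext i
      simpa using hk (x i) (y i)
  set A : Set (Fin n → ZMod 2) := {z | g z = 0 ∧ g (a + z) = 0} with hAdef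
  set B : Set (Fin n → ZMod 2) := {z | g z = 0 ∧ g (a + z) = 1 ∧ g (b + z) = 1} with hBdef
  set C : Set (Fin n → ZMod 2) :=
    {z | g z = 0 ∧ g (a + z) = 1 ∧ g (b + z) = 0 ∧ g (c + z) = 1} with hCdef
  set F : Set (Fin n → ZMod 2) :=
    {z | g z = 0 ∧ g (a + z) = 1 ∧ g (b + z) = 0 ∧ g (c + z) = 0} with hFdef
  have ebz : ∀ z : Fin n → ZMod 2, b + (a + z) = c + z := by
    intro z
    rw [hsum]; ring
  have ecz : ∀ z : Fin n → ZMod 2, c + (a + z) = b + z := by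
    intro z
    have hk : ∀ u v w : ZMod 2, (u + v) + (u + w) = v + w := by decide
    rw [hsum]
    funext i
    simpa using hk (a i) (b i) (z i)
  have hinj : Function.Injective (fun z : Fin n → ZMod 2 => a + z) := by
    intro u v huv
    exact add_left_cancel huv
  -- subset facts
  have hsubA : A ⊆ {y | PatternOZZ g a y} := by
    rintro z ⟨hz0, hz1⟩
    exact Or.inl ⟨ha, hz0, hz1⟩
  have hsubB : B ∪ ((fun z => a + z) '' F) ⊆ {y | PatternOZZ g b y} := by
    rintro w (⟨hz0, _, hz2⟩ | ⟨z, hzF, rfl⟩)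
    · exact Or.inr (Or.inr ⟨hb, hz0, hz2⟩)
    · exact Or.inr (Or.inl ⟨hb, hzF.2.1, by rw [ebz]; exact hzF.2.2.2⟩)
  have hsubC : C ∪ ((fun z => a + z) '' F) ⊆ {y | PatternOZZ g c y} := by
    rintro w (⟨hz0, _, _, hz3⟩ | ⟨z, hzF, rfl⟩)
    · exact Or.inr (Or.inr ⟨hc, hz0, hz3⟩)
    · exact Or.inr (Or.inl ⟨hc, hzF.2.1, by rw [ecz]; exact hzF.2.2.1⟩)
  have hdisjB : Disjoint B ((fun z => a + z) '' F) := by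
    rw [Set.disjoint_left]
    rintro w hwB ⟨z, hzF, rfl⟩
    exact absurd (hwB.1.symm.trans hzF.2.1) (by decide)
  have hdisjC : Disjoint C ((fun z => a + z) '' F) := by
    rw [Set.disjoint_left]
    rintro w hwC ⟨z, hzF, rfl⟩
    exact absurd (hwC.1.symm.trans hzF.2.1) (by decide)
  have cover : ({z | g z = 0} : Set (Fin n → ZMod 2)) ⊆ A ∪ B ∪ C ∪ F := by
    intro z hz
    have h1 := zmod2_cases (g (a + z))
    have h2 := zmod2_cases (g (b + z))
    have h3 := zmod2_cases (g (c + z))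
    simp only [Set.mem_setOf_eq] at hz
    simp only [Set.mem_union, hAdef, hBdef, hCdef, hFdef, Set.mem_setOf_eq]
    tauto
  -- counting
  have fin : ∀ s : Set (Fin n → ZMod 2), s.Finite := fun s => Set.toFinite s
  have himgF : ((fun z : Fin n → ZMod 2 => a + z) '' F).ncard = F.ncard :=
    Set.ncard_image_of_injective F hinj
  have cB : B.ncard + F.ncard ≤ ({y | PatternOZZ g b y} : Set (Fin n → ZMod 2)).ncard := by
    have := Set.ncard_union_eq hdisjB (fin B) (fin _)
    rw [himgF] at this
    rw [← this]
    exact Set.ncard_le_ncard hsubB (fin _)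
  have cC : C.ncard + F.ncard ≤ ({y | PatternOZZ g c y} : Set (Fin n → ZMod 2)).ncard := by
    have := Set.ncard_union_eq hdisjC (fin C) (fin _)
    rw [himgF] at this
    rw [← this]
    exact Set.ncard_le_ncard hsubC (fin _)
  have cA : A.ncard ≤ ({y | PatternOZZ g a y} : Set (Fin n → ZMod 2)).ncard :=
    Set.ncard_le_ncard hsubA (fin _)
  have cZ : ({z | g z = 0} : Set (Fin n → ZMod 2)).ncard ≤
      A.ncard + B.ncard + C.ncard + F.ncard := by
    calc ({z | g z = 0} : Set (Fin n → ZMod 2)).ncard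
        ≤ (A ∪ B ∪ C ∪ F).ncard := Set.ncard_le_ncard cover (fin _)
      _ ≤ (A ∪ B ∪ C).ncard + F.ncard := Set.ncard_union_le _ _
      _ ≤ (A ∪ B).ncard + C.ncard + F.ncard := by
          have := Set.ncard_union_le (A ∪ B) C
          omega
      _ ≤ A.ncard + B.ncard + C.ncard + F.ncard := by
          have := Set.ncard_union_le A B
          omega
  have hha := h a
  have hhb := h b
  have hhc := h c
  have rA : (A.ncard : ℝ) ≤ (({y | PatternOZZ g a y} : Set (Fin n → ZMod 2)).ncard : ℝ) := by
    exact_mod_cast cA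
  have rB : (B.ncard : ℝ) + (F.ncard : ℝ) ≤
      (({y | PatternOZZ g b y} : Set (Fin n → ZMod 2)).ncard : ℝ) := by
    exact_mod_cast cB
  have rC : (C.ncard : ℝ) + (F.ncard : ℝ) ≤
      (({y | PatternOZZ g c y} : Set (Fin n → ZMod 2)).ncard : ℝ) := by
    exact_mod_cast cC
  have rZ : (({z | g z = 0} : Set (Fin n → ZMod 2)).ncard : ℝ) ≤
      (A.ncard : ℝ) + (B.ncard : ℝ) + (C.ncard : ℝ) + (F.ncard : ℝ) := by
    exact_mod_cast cZ
  linarith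
end

section
/- Let n be a positive integer and let α, β ∈ 𝔽₂ⁿ be distinct nonzero vectors. Define f : 𝔽₂ⁿ → 𝔽₂ by f(x) = 1 if and only if α·x = 1 or β·x = 1. Then for every x ∈ 𝔽₂ⁿ with f(x) = 1, the number of y ∈ 𝔽₂ⁿ such that f(y) = 1 and f(x+y) = 1 equals 2^(n-1). -/
open scoped BigOperators

lemma dotp_add_right {n : ℕ} (γ x y : Fin n → ZMod 2) :
    dotp γ (x + y) = dotp γ x + dotp γ y := by
  simp [dotp, mul_add, Finset.sum_add_distrib]

lemma dotp_add_left {n : ℕ} (a b y : Fin n → ZMod 2) :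
    dotp (a + b) y = dotp a y + dotp b y := by
  simp [dotp, add_mul, Finset.sum_add_distrib]

lemma card_dotp_one {n : ℕ} (γ : Fin n → ZMod 2) (hγ : γ ≠ 0) :
    ({y | dotp γ y = 1} : Set (Fin n → ZMod 2)).ncard = 2 ^ (n - 1) := by
  classical
  obtain ⟨i, hi⟩ : ∃ i, γ i ≠ 0 := by
    by_contra h; push_neg at h; exact hγ (funext h)
  have hγi : γ i = 1 := by
    have : ∀ a : ZMod 2, a ≠ 0 → a = 1 := by decide
    exact this _ hi
  set y₀ : Fin n → ZMod 2 := Pi.single i 1 with hy₀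
  have hd0 : dotp γ y₀ = 1 := by
    simp [dotp, hy₀, Pi.single_apply, mul_ite, Finset.sum_ite_eq', hγi]
  set F1 := Finset.univ.filter (fun y : Fin n → ZMod 2 => dotp γ y = 1) with hF1
  set F0 := Finset.univ.filter (fun y : Fin n → ZMod 2 => dotp γ y = 0) with hF0
  have key : ∀ y : Fin n → ZMod 2, y ∈ F1 → y + y₀ ∈ F0 := by
    intro y hy
    simp only [hF1, hF0, Finset.mem_filter, Finset.mem_univ, true_and] at hy ⊢
    rw [dotp_add_right, hy, hd0]; decide
  have key' : ∀ y : Fin n → ZMod 2, y ∈ F0 → y + y₀ ∈ F1 := by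
    intro y hy
    simp only [hF1, hF0, Finset.mem_filter, Finset.mem_univ, true_and] at hy ⊢
    rw [dotp_add_right, hy, hd0]; decide
  have hcancel : ∀ y : Fin n → ZMod 2, y + y₀ + y₀ = y := by
    intro y; funext j
    simp [add_assoc, CharTwo.add_self_eq_zero]
  have hcard : F1.card = F0.card := by
    apply Finset.card_nbij' (fun y => y + y₀) (fun y => y + y₀) key key'
    · intro y _; exact hcancel y
    · intro y _; exact hcancel y
  have hsplit : F1.card + F0.card = 2 ^ n := by
    have : F0 = Finset.univ.filter (fun y : Fin n → ZMod 2 => ¬ dotp γ y = 1) := by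
      apply Finset.filter_congr
      intro y _
      have : ∀ a : ZMod 2, a = 0 ↔ ¬ a = 1 := by decide
      simp [this]
    rw [this, Finset.card_filter_add_card_filter_not]
    simp [Finset.card_univ, Fintype.card_fun]
  have hn : 1 ≤ n := by
    rcases Nat.eq_zero_or_pos n with h | h
    · subst h; exact absurd (funext fun j => j.elim0) hγ
    · exact h
  have h2 : 2 * F1.card = 2 ^ n := by omega
  have : F1.card = 2 ^ (n - 1) := by
    have : 2 ^ n = 2 * 2 ^ (n - 1) := by
      rw [← pow_succ']
      congr 1; omega
    omega
  rw [Set.ncard_eq_toFinset_card']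
  simpa [hF1, Set.toFinset_setOf] using this

theorem stmt_8 (n : ℕ) (hn : 0 < n) (α β : Fin n → ZMod 2)
    (hα : α ≠ 0) (hβ : β ≠ 0) (hαβ : α ≠ β)
    (f : (Fin n → ZMod 2) → ZMod 2)
    (hf : ∀ x : Fin n → ZMod 2, f x = 1 ↔ (dotp α x = 1 ∨ dotp β x = 1))
    (x : Fin n → ZMod 2) (hx : f x = 1) :
    ({y | f y = 1 ∧ f (x + y) = 1} : Set (Fin n → ZMod 2)).ncard = 2 ^ (n - 1) := by
  have hmem : ∀ y : Fin n → ZMod 2, (f y = 1 ∧ f (x + y) = 1) ↔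
      ((dotp α y = 1 ∨ dotp β y = 1) ∧
        (dotp α x + dotp α y = 1 ∨ dotp β x + dotp β y = 1)) := by
    intro y
    rw [hf y, hf (x + y), dotp_add_right, dotp_add_right]
  have hcases : ∀ c : ZMod 2, c = 0 ∨ c = 1 := by decide
  have hxc : dotp α x = 1 ∨ dotp β x = 1 := (hf x).mp hx
  rcases hcases (dotp α x) with hA | hA <;> rcases hcases (dotp β x) with hB | hB
  · rw [hA, hB] at hxc; simp at hxc
  · -- A = 0, B = 1 : set is {y | dotp α y = 1}
    have hset : ({y | f y = 1 ∧ f (x + y) = 1} : Set (Fin n → ZMod 2)) =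
        {y | dotp α y = 1} := by
      ext y
      rw [Set.mem_setOf_eq, Set.mem_setOf_eq, hmem y, hA, hB]
      revert hxc
      have : ∀ u v : ZMod 2, ((u = 1 ∨ v = 1) ∧ (0 + u = 1 ∨ 1 + v = 1)) ↔ u = 1 := by
        decide
      intro _; exact this _ _
    rw [hset]; exact card_dotp_one α hα
  · -- A = 1, B = 0 : set is {y | dotp β y = 1}
    have hset : ({y | f y = 1 ∧ f (x + y) = 1} : Set (Fin n → ZMod 2)) =
        {y | dotp β y = 1} := by
      ext y
      rw [Set.mem_setOf_eq, Set.mem_setOf_eq, hmem y, hA, hB]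
      have : ∀ u v : ZMod 2, ((u = 1 ∨ v = 1) ∧ (1 + u = 1 ∨ 0 + v = 1)) ↔ v = 1 := by
        decide
      exact this _ _
    rw [hset]; exact card_dotp_one β hβ
  · -- A = 1, B = 1 : set is {y | dotp (α+β) y = 1}
    have hset : ({y | f y = 1 ∧ f (x + y) = 1} : Set (Fin n → ZMod 2)) =
        {y | dotp (α + β) y = 1} := by
      ext y
      rw [Set.mem_setOf_eq, Set.mem_setOf_eq, hmem y, hA, hB, dotp_add_left]
      have : ∀ u v : ZMod 2, ((u = 1 ∨ v = 1) ∧ (1 + u = 1 ∨ 1 + v = 1)) ↔ u + v = 1 := by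
        decide
      exact this _ _
    rw [hset]
    apply card_dotp_one
    intro h
    apply hαβ
    funext j
    have hj : α j + β j = 0 := congrFun h j
    have : ∀ u v : ZMod 2, u + v = 0 → u = v := by decide
    exact this _ _ hj
end

section
/- Let n ≥ 2 be an integer. For every linear function g : 𝔽₂ⁿ → 𝔽₂, there exists a function h : 𝔽₂ⁿ → 𝔽₂ that is triangle-free, not linear, and satisfies dist(g, h) = 2^(−n), i.e., h differs from g on exactly one point of 𝔽₂ⁿ. -/
open scoped BigOperators

theorem stmt_13 (n : ℕ) (hn : 2 ≤ n) (g : (Fin n → ZMod 2) → ZMod 2)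
    (hg : IsLinearFn g) :
    ∃ h : (Fin n → ZMod 2) → ZMod 2,
      TriangleFree h ∧ ¬ IsLinearFn h ∧ fdist g h = 1 / 2 ^ n ∧
        ({x | g x ≠ h x} : Set (Fin n → ZMod 2)).ncard = 1 := by
  have htwo : ∀ a : ZMod 2, a = 0 ∨ a = 1 := by decide
  have addself : ∀ u : Fin n → ZMod 2, u + u = 0 := by
    intro u
    funext j
    show u j + u j = 0
    exact CharTwo.add_self_eq_zero (u j)
  have hg0 : g 0 = 0 := by
    have h00 := hg 0 0
    rw [add_zero] at h00
    rcases htwo (g 0) with h | h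
    · exact h
    · rw [h] at h00; exact absurd h00 (by decide)
  have pack : ∀ (h : (Fin n → ZMod 2) → ZMod 2) (v : Fin n → ZMod 2),
      ({x | g x ≠ h x} : Set (Fin n → ZMod 2)) = {v} →
      TriangleFree h → ¬ IsLinearFn h →
      TriangleFree h ∧ ¬ IsLinearFn h ∧ fdist g h = 1 / 2 ^ n ∧
        ({x | g x ≠ h x} : Set (Fin n → ZMod 2)).ncard = 1 := by
    intro h v hdiff htf hnl
    refine ⟨htf, hnl, ?_, ?_⟩
    · unfold fdist
      rw [hdiff, Set.ncard_singleton]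
      norm_num
    · rw [hdiff, Set.ncard_singleton]
  set i0 : Fin n := ⟨0, by omega⟩ with hi0
  set i1 : Fin n := ⟨1, by omega⟩ with hi1
  set e0 : Fin n → ZMod 2 := fun j => if j = i0 then 1 else 0 with he0
  set e1 : Fin n → ZMod 2 := fun j => if j = i1 then 1 else 0 with he1
  have hi01 : i0 ≠ i1 := by simp [hi0, hi1, Fin.ext_iff]
  have he0ne : e0 ≠ 0 := by
    intro hcon
    have := congrFun hcon i0
    simp [he0] at this
  have he1ne0 : e1 ≠ 0 := by
    intro hcon
    have := congrFun hcon i1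
    simp [he1] at this
  have he01 : e0 ≠ e1 := by
    intro hcon
    have := congrFun hcon i0
    simp [he0, he1, hi01] at this
  by_cases hex : ∃ v, g v = 1
  · obtain ⟨v, hv⟩ := hex
    have hw : ∃ w, w ≠ 0 ∧ g w = 0 := by
      rcases htwo (g e0) with h0 | h0
      · exact ⟨e0, he0ne, h0⟩
      · rcases htwo (g e1) with h1 | h1
        · exact ⟨e1, he1ne0, h1⟩
        · refine ⟨e0 + e1, ?_, ?_⟩
          · intro hcon
            apply he01
            have h2 := congrArg (· + e1) hcon
            simpa [add_assoc, addself e1] using h2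
          · rw [hg, h0, h1]; decide
    obtain ⟨w, hwne, hgw⟩ := hw
    set h : (Fin n → ZMod 2) → ZMod 2 := fun x => if x = v then 0 else g x with hh
    have hval : ∀ z, h z = 1 → g z = 1 := by
      intro z hz
      by_cases hzv : z = v
      · simp [hh, hzv] at hz
      · simpa [hh, hzv] using hz
    refine ⟨h, pack h v ?_ ?_ ?_⟩
    · ext x
      by_cases hxv : x = v
      · subst hxv; simp [hh, hv]
      · simp [hh, hxv]
    · intro x y ⟨hx, hy, hxy⟩
      have hlin := hg x y
      rw [hval x hx, hval y hy, hval _ hxy] at hlin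
      exact absurd hlin (by decide)
    · intro hl
      have hne : v + w ≠ v := by
        intro hcon
        exact hwne (add_left_cancel (hcon.trans (add_zero v).symm))
      have hx1 : h (v + w) = 1 := by
        have hgvw : g (v + w) = 1 := by rw [hg, hv, hgw, add_zero]
        simpa [hh, hne] using hgvw
      have hy0 : h w = 0 := by
        by_cases hwv : w = v
        · simp [hh, hwv]
        · simpa [hh, hwv] using hgw
      have hs : v + w + w = v := by rw [add_assoc, addself, add_zero]
      have hcon := hl (v + w) w
      rw [hs, hx1, hy0, add_zero] at hcon
      have hv0 : h v = 0 := by simp [hh]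
      rw [hv0] at hcon
      exact absurd hcon (by decide)
  · push_neg at hex
    have hz : ∀ x, g x = 0 := by
      intro x
      rcases htwo (g x) with h | h
      · exact h
      · exact absurd h (hex x)
    set h : (Fin n → ZMod 2) → ZMod 2 := fun x => if x = e0 then 1 else 0 with hh
    refine ⟨h, pack h e0 ?_ ?_ ?_⟩
    · ext x
      by_cases hx : x = e0
      · subst hx; simp [hh, hz]
      · simp [hh, hx, hz]
    · intro x y ⟨hx, hy, hxy⟩
      have hxe : x = e0 := by by_contra hc; simp [hh, hc] at hx
      have hye : y = e0 := by by_contra hc; simp [hh, hc] at hy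
      subst hxe; subst hye
      rw [addself e0] at hxy
      have h0 : h 0 = 0 := by simp [hh, Ne.symm he0ne]
      rw [h0] at hxy
      exact absurd hxy (by decide)
    · intro hl
      have hne : e0 + e1 ≠ e0 := by
        intro hcon
        exact he1ne0 (add_left_cancel (hcon.trans (add_zero e0).symm))
      have hA : h (e0 + e1) = 0 := by simp [hh, hne]
      have hB : h e0 = 1 := by simp [hh]
      have hC : h e1 = 0 := by simp [hh, Ne.symm he01]
      have hcon := hl e0 e1
      rw [hA, hB, hC, add_zero] at hcon
      exact absurd hcon (by decide)
end

section
/- Let D be a nonempty finite set, R a set, and let P₁, P₂ be sets of functions from D to R whose intersection P = P₁ ∩ P₂ is nonempty. Let ε₀ > 0 and suppose that dist(g₁, g₂) ≥ ε₀ for every g₁ ∈ P₁ \ P₂ and every g₂ ∈ P₂ \ P₁. Then for every ε > 0 and every function f : D → R with dist(f, P) ≥ ε, it holds that max(dist(f, P₁), dist(f, P₂)) ≥ min(ε, ε₀/2). -/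
/-- Fractional Hamming distance between two functions on a finite domain. -/
noncomputable def gdist {D R : Type*} [Fintype D] (f g : D → R) : ℝ :=
  (({x | f x ≠ g x} : Set D).ncard : ℝ) / (Fintype.card D : ℝ)

/-- Distance from a function to a set of functions (infimum of distances). -/
noncomputable def gdistSet {D R : Type*} [Fintype D] (f : D → R) (P : Set (D → R)) : ℝ :=
  sInf (gdist f '' P)

lemma gdist_comm {D R : Type*} [Fintype D] (f g : D → R) : gdist f g = gdist g f := by
  unfold gdist
  rw [show {x | f x ≠ g x} = {x | g x ≠ f x} from Set.ext fun x => ⟨Ne.symm, Ne.symm⟩]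

lemma gdist_triangle {D R : Type*} [Fintype D] [Nonempty D] (f g h : D → R) :
    gdist f h ≤ gdist f g + gdist g h := by
  unfold gdist
  rw [← add_div, div_le_div_iff_of_pos_right]
  · have hsub : {x | f x ≠ h x} ⊆ {x | f x ≠ g x} ∪ {x | g x ≠ h x} := by
      intro x hx
      by_cases hfg : f x = g x
      · right; simp only [Set.mem_setOf_eq]; rw [← hfg]; exact hx
      · left; exact hfg
    calc (({x | f x ≠ h x} : Set D).ncard : ℝ)
        ≤ (({x | f x ≠ g x} ∪ {x | g x ≠ h x} : Set D).ncard : ℝ) := by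
          exact_mod_cast Set.ncard_le_ncard hsub (Set.toFinite _)
      _ ≤ (({x | f x ≠ g x} : Set D).ncard : ℝ) + (({x | g x ≠ h x} : Set D).ncard : ℝ) := by
          exact_mod_cast Set.ncard_union_le _ _
  · exact_mod_cast Fintype.card_pos

lemma gdist_image_finite {D R : Type*} [Fintype D] (f : D → R) (P : Set (D → R)) :
    (gdist f '' P).Finite := by
  apply Set.Finite.subset ((Set.finite_Iic (Fintype.card D)).image
    (fun n : ℕ => (n : ℝ) / (Fintype.card D : ℝ)))
  rintro _ ⟨g, hg, rfl⟩
  exact ⟨({x | f x ≠ g x} : Set D).ncard, Set.ncard_le_ncard (Set.subset_univ _)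
    (Set.toFinite _) |>.trans_eq (by simp [Set.ncard_univ]), rfl⟩

lemma gdistSet_le {D R : Type*} [Fintype D] (f : D → R) (P : Set (D → R))
    {g : D → R} (hg : g ∈ P) : gdistSet f P ≤ gdist f g :=
  csInf_le (gdist_image_finite f P).bddBelow ⟨g, hg, rfl⟩

lemma gdistSet_mem {D R : Type*} [Fintype D] (f : D → R) {P : Set (D → R)}
    (hP : P.Nonempty) : ∃ g ∈ P, gdistSet f P = gdist f g := by
  have := (hP.image (gdist f)).csInf_mem (gdist_image_finite f P)
  obtain ⟨g, hg, hgd⟩ := this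
  exact ⟨g, hg, hgd.symm⟩

theorem stmt_14 (D R : Type*) [Fintype D] [Nonempty D]
    (P₁ P₂ : Set (D → R)) (hP : (P₁ ∩ P₂).Nonempty)
    (ε₀ : ℝ) (hε₀ : 0 < ε₀)
    (hsep : ∀ g₁ ∈ P₁ \ P₂, ∀ g₂ ∈ P₂ \ P₁, ε₀ ≤ gdist g₁ g₂)
    (ε : ℝ) (hε : 0 < ε) (f : D → R) (hf : ε ≤ gdistSet f (P₁ ∩ P₂)) :
    min ε (ε₀ / 2) ≤ max (gdistSet f P₁) (gdistSet f P₂) := by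
  by_contra hcon
  push_neg at hcon
  have h1 : gdistSet f P₁ < min ε (ε₀ / 2) := (le_max_left _ _).trans_lt hcon
  have h2 : gdistSet f P₂ < min ε (ε₀ / 2) := (le_max_right _ _).trans_lt hcon
  have hP₁ : P₁.Nonempty := ⟨hP.choose, hP.choose_spec.1⟩
  have hP₂ : P₂.Nonempty := ⟨hP.choose, hP.choose_spec.2⟩
  obtain ⟨g₁, hg₁, hd₁⟩ := gdistSet_mem f hP₁
  obtain ⟨g₂, hg₂, hd₂⟩ := gdistSet_mem f hP₂
  have hnot₁ : g₁ ∉ P₂ := by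
    intro hmem
    have : ε ≤ gdist f g₁ := hf.trans (gdistSet_le f _ ⟨hg₁, hmem⟩)
    have : gdist f g₁ < ε := hd₁ ▸ (lt_min_iff.mp h1).1
    linarith
  have hnot₂ : g₂ ∉ P₁ := by
    intro hmem
    have : ε ≤ gdist f g₂ := hf.trans (gdistSet_le f _ ⟨hmem, hg₂⟩)
    have : gdist f g₂ < ε := hd₂ ▸ (lt_min_iff.mp h2).1
    linarith
  have hsep' := hsep g₁ ⟨hg₁, hnot₁⟩ g₂ ⟨hg₂, hnot₂⟩
  have htri : gdist g₁ g₂ ≤ gdist f g₁ + gdist f g₂ := by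
    rw [gdist_comm f g₁] at *
    exact gdist_triangle g₁ f g₂
  have h1' : gdist f g₁ < ε₀ / 2 := hd₁ ▸ (lt_min_iff.mp h1).2
  have h2' : gdist f g₂ < ε₀ / 2 := hd₂ ▸ (lt_min_iff.mp h2).2
  linarith
end
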